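/- For every H ∈ (0,1/2) and all 0 ≤ s < t: ∫_s^t K_H(t,r)² dr ≥ (c_H² / (2H)) · (t−s)^{2H}. -/

import Mathlib

open Real MeasureTheory

noncomputable section

/-- The Beta function `B(a,b) = ∫_0^1 r^{a−1}(1−r)^{b−1} dr`. -/
def betaFn (a b : ℝ) : ℝ :=
  ∫ r in (0:ℝ)..1, r ^ (a - 1) * (1 - r) ^ (b - 1)

/-- The normalizing constant `c_H = (2H/((1−2H)·B(1−2H, H+1/2)))^{1/2}`. -/
def cH (H : ℝ) : ℝ :=
  Real.sqrt (2 * H / ((1 - 2 * H) * betaFn (1 - 2 * H) (H + 1/2)))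

/-- The Volterra kernel
`K_H(t,s) = c_H ((t/s)^{H−1/2}(t−s)^{H−1/2} + (1/2−H) s^{1/2−H} ∫_s^t r^{H−3/2}(r−s)^{H−1/2} dr)`. -/
def KH (H t s : ℝ) : ℝ :=
  cH H * ((t / s) ^ (H - 1/2) * (t - s) ^ (H - 1/2) +
    (1/2 - H) * s ^ (1/2 - H) * ∫ r in s..t, r ^ (H - 3/2) * (r - s) ^ (H - 1/2))

/-- The kernel `K̃_H(t,s) = t^{H−1/2} (t−s)^{−1/2−H} s^{1/2−H}`. -/
def KtH (H t s : ℝ) : ℝ :=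
  t ^ (H - 1/2) * (t - s) ^ (-(1/2) - H) * s ^ (1/2 - H)

/-! The lower bound for the inner integral obtained by freezing `(r - u)^{H-1/2}` at its minimum
`(t - u)^{H-1/2}` exactly compensates the factor `(t/u)^{H-1/2} ≤ 1` of the first term, so that
`K_H(t,u) ≥ c_H (t - u)^{H-1/2}` pointwise; squaring and integrating gives the bound.
Since an integral of a non-integrable function is `0`, one also needs `K_H(t,·)² ∈ L¹`: the
splitting `r^{H-3/2} ≤ u^{3H/2-1} (r - u)^{-(1+H)/2}` gives
`K_H(t,u) ≤ c_H ((t - u)^{H-1/2} + C u^{(H-1)/2})`, and both terms are square integrable. -/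

open Set intervalIntegral

lemma cH_nonneg (H : ℝ) : 0 ≤ cH H := Real.sqrt_nonneg _

lemma rpow_sq {x : ℝ} (hx : 0 ≤ x) (y : ℝ) : (x ^ y) ^ 2 = x ^ (2 * y) := by
  rw [← Real.rpow_mul_natCast hx, mul_comm]; norm_num

lemma rpow_add_le_mul_of_nonpos {x y z a b : ℝ} (hx : 0 < x) (hxy : x ≤ y) (hz : 0 < z)
    (hzy : z ≤ y) (ha : a ≤ 0) (hb : b ≤ 0) : y ^ (a + b) ≤ x ^ a * z ^ b := by
  rw [Real.rpow_add (hx.trans_le hxy)]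
  exact mul_le_mul (rpow_le_rpow_of_nonpos hx hxy ha) (rpow_le_rpow_of_nonpos hz hzy hb)
    (rpow_nonneg (hz.le.trans hzy) b) (rpow_nonneg hx.le a)

lemma integral_sub_rpow {c : ℝ} (hc : -1 < c) (s t : ℝ) :
    ∫ u in s..t, (t - u) ^ c = (t - s) ^ (c + 1) / (c + 1) := by
  rw [integral_comp_sub_left (fun x => x ^ c), integral_rpow (Or.inl hc), sub_self,
    Real.zero_rpow (by linarith), sub_zero]

lemma integral_rpow_sub {c : ℝ} (hc : -1 < c) (s t : ℝ) :
    ∫ r in s..t, (r - s) ^ c = (t - s) ^ (c + 1) / (c + 1) := by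
  rw [integral_comp_sub_right (fun x => x ^ c), integral_rpow (Or.inl hc), sub_self,
    Real.zero_rpow (by linarith), sub_zero]

lemma intervalIntegrable_sub_rpow {c : ℝ} (hc : -1 < c) (s t : ℝ) :
    IntervalIntegrable (fun u => (t - u) ^ c) volume s t := by
  simpa using (intervalIntegrable_rpow' hc (a := t - s) (b := t - t)).comp_sub_left t

lemma intervalIntegrable_rpow_sub {c : ℝ} (hc : -1 < c) (s t : ℝ) :
    IntervalIntegrable (fun r => (r - s) ^ c) volume s t := by
  simpa using (intervalIntegrable_rpow' hc (a := s - s) (b := t - s)).comp_sub_right s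

lemma MeasureTheory.StronglyMeasurable.setIntegral_prodMk_preimage {α β E : Type*}
    [MeasurableSpace α] [MeasurableSpace β] [NormedAddCommGroup E] [NormedSpace ℝ E]
    {ν : Measure β} [SFinite ν] {f : α → β → E} (hf : StronglyMeasurable (Function.uncurry f))
    {S : Set (α × β)} (hS : MeasurableSet S) :
    StronglyMeasurable fun a => ∫ b in Prod.mk a ⁻¹' S, f a b ∂ν := by
  simp_rw [← MeasureTheory.integral_indicator (measurable_prodMk_left hS)]
  exact (hf.indicator hS).integral_prod_right'

lemma MeasureTheory.StronglyMeasurable.intervalIntegral_left {E : Type*}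
    [NormedAddCommGroup E] [NormedSpace ℝ E] {f : ℝ → ℝ → E}
    (hf : StronglyMeasurable (Function.uncurry f)) (t : ℝ) :
    StronglyMeasurable fun u => ∫ r in u..t, f u r := by
  -- the slices `Prod.mk u ⁻¹' _` of these two sets are `Ioc u t` and `Ioc t u` definitionally
  have hIoc : MeasurableSet {p : ℝ × ℝ | p.1 < p.2 ∧ p.2 ≤ t} :=
    (_root_.measurableSet_lt measurable_fst measurable_snd).inter
      (measurable_snd measurableSet_Iic)
  have hIoc' : MeasurableSet {p : ℝ × ℝ | t < p.2 ∧ p.2 ≤ p.1} :=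
    (measurable_snd measurableSet_Ioi).inter
      (_root_.measurableSet_le measurable_snd measurable_fst)
  exact (hf.setIntegral_prodMk_preimage hIoc).sub (hf.setIntegral_prodMk_preimage hIoc')

lemma measurable_KH (H t : ℝ) : Measurable (KH H t) := by
  have := (StronglyMeasurable.intervalIntegral_left
    (f := fun u r => r ^ (H - 3/2) * (r - u) ^ (H - 1/2))
    (by fun_prop : Measurable _).stronglyMeasurable t).measurable
  unfold KH
  fun_prop

lemma continuousOn_rpow_uIcc {a u t : ℝ} (hu : 0 < u) (hut : u ≤ t) :
    ContinuousOn (fun r : ℝ => r ^ a) (uIcc u t) := by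
  rw [uIcc_of_le hut]
  exact continuousOn_id.rpow_const fun r hr => Or.inl (hu.trans_le hr.1).ne'

lemma intervalIntegrable_rpow_mul_rpow_sub {a c u t : ℝ} (hu : 0 < u) (hut : u ≤ t)
    (hc : -1 < c) : IntervalIntegrable (fun r => r ^ a * (r - u) ^ c) volume u t :=
  (intervalIntegrable_rpow_sub hc u t).continuousOn_mul (continuousOn_rpow_uIcc hu hut)

lemma le_integral_rpow_mul_rpow_sub {H u t : ℝ} (hH : -1/2 < H) (hH' : H < 1/2) (hu : 0 < u)
    (hut : u ≤ t) :
    (t - u) ^ (H - 1/2) * ((u ^ (H - 1/2) - t ^ (H - 1/2)) / (1/2 - H)) ≤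
      ∫ r in u..t, r ^ (H - 3/2) * (r - u) ^ (H - 1/2) := by
  have hu0 : (0 : ℝ) ∉ uIcc u t := by rw [uIcc_of_le hut]; exact fun h => hu.not_ge h.1
  calc (t - u) ^ (H - 1/2) * ((u ^ (H - 1/2) - t ^ (H - 1/2)) / (1/2 - H))
      = ∫ r in u..t, r ^ (H - 3/2) * (t - u) ^ (H - 1/2) := by
        rw [intervalIntegral.integral_mul_const, integral_rpow (Or.inr ⟨by linarith, hu0⟩),
          show H - 3/2 + 1 = H - 1/2 by ring, mul_comm, ← neg_sub,
          show 1/2 - H = -(H - 1/2) by ring, neg_div_neg_eq]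
    _ ≤ ∫ r in u..t, r ^ (H - 3/2) * (r - u) ^ (H - 1/2) := by
        refine integral_mono_on_of_le_Ioo hut
          ((continuousOn_rpow_uIcc hu hut).mul continuousOn_const).intervalIntegrable
          (intervalIntegrable_rpow_mul_rpow_sub hu hut (by linarith)) fun r hr => ?_
        exact mul_le_mul_of_nonneg_left
          (rpow_le_rpow_of_nonpos (sub_pos.2 hr.1) (by linarith [hr.2]) (by linarith))
          (rpow_nonneg (hu.trans hr.1).le _)

lemma integral_rpow_mul_rpow_sub_le {H u t : ℝ} (hH : 0 < H) (hH' : H ≤ 2/3) (hu : 0 < u)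
    (hut : u ≤ t) :
    ∫ r in u..t, r ^ (H - 3/2) * (r - u) ^ (H - 1/2) ≤
      u ^ (3/2 * H - 1) * ((t - u) ^ (H / 2) / (H / 2)) := by
  calc ∫ r in u..t, r ^ (H - 3/2) * (r - u) ^ (H - 1/2)
      ≤ ∫ r in u..t, u ^ (3/2 * H - 1) * (r - u) ^ (H / 2 - 1) := by
        refine integral_mono_on_of_le_Ioo hut (intervalIntegrable_rpow_mul_rpow_sub hu hut
          (by linarith)) ((intervalIntegrable_rpow_sub (by linarith) u t).const_mul _)
          fun r hr => ?_
        have hru : 0 < r - u := sub_pos.2 hr.1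
        calc r ^ (H - 3/2) * (r - u) ^ (H - 1/2)
            = r ^ ((3/2 * H - 1) + -(1/2 + H/2)) * (r - u) ^ (H - 1/2) := by
              rw [show (3/2 * H - 1) + -(1/2 + H/2) = H - 3/2 by ring]
          _ ≤ u ^ (3/2 * H - 1) * (r - u) ^ (-(1/2 + H/2)) * (r - u) ^ (H - 1/2) := by
            gcongr
            exact rpow_add_le_mul_of_nonpos hu hr.1.le hru (by linarith) (by linarith)
              (by linarith)
          _ = u ^ (3/2 * H - 1) * (r - u) ^ (H / 2 - 1) := by
            rw [mul_assoc, ← Real.rpow_add hru]; ring_nf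
    _ = u ^ (3/2 * H - 1) * ((t - u) ^ (H / 2) / (H / 2)) := by
        rw [intervalIntegral.integral_const_mul, integral_rpow_sub (by linarith)]; ring_nf

lemma cH_mul_rpow_le_KH {H u t : ℝ} (hH : -1/2 < H) (hH' : H < 1/2) (hu : 0 < u) (hut : u ≤ t) :
    cH H * (t - u) ^ (H - 1/2) ≤ KH H t u := by
  refine mul_le_mul_of_nonneg_left ?_ (cH_nonneg H)
  have hH₁ : 0 < 1/2 - H := by linarith
  have hu_inv : u ^ (1/2 - H) = (u ^ (H - 1/2))⁻¹ := by rw [← rpow_neg hu.le]; ring_nf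
  rw [Real.div_rpow (hu.le.trans hut) hu.le, hu_inv]
  set A := u ^ (H - 1/2)
  set B := t ^ (H - 1/2)
  set C := (t - u) ^ (H - 1/2)
  have hA : 0 < A := rpow_pos_of_pos hu _
  have hcancel : (1/2 - H) * ((A - B) / (1/2 - H)) = A - B := mul_div_cancel₀ _ hH₁.ne'
  calc C = B / A * C + A⁻¹ * C * ((1/2 - H) * ((A - B) / (1/2 - H))) := by
        rw [hcancel]; field_simp; ring
    _ = B / A * C + (1/2 - H) * A⁻¹ * (C * ((A - B) / (1/2 - H))) := by ring
    _ ≤ _ := add_le_add le_rfl (mul_le_mul_of_nonneg_left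
          (le_integral_rpow_mul_rpow_sub hH hH' hu hut) (mul_nonneg hH₁.le (inv_nonneg.2 hA.le)))

lemma KH_le_cH_mul {H u t : ℝ} (hH : 0 < H) (hH' : H < 1/2) (hu : 0 < u) (hut : u ≤ t) :
    KH H t u ≤
      cH H * ((t - u) ^ (H - 1/2) + (1 - 2 * H) / H * t ^ (H / 2) * u ^ ((H - 1) / 2)) := by
  refine mul_le_mul_of_nonneg_left (add_le_add ?_ ?_) (cH_nonneg H)
  · refine mul_le_of_le_one_left (rpow_nonneg (by linarith) _) ?_
    exact rpow_le_one_of_one_le_of_nonpos ((one_le_div hu).2 hut) (by linarith)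
  · calc (1/2 - H) * u ^ (1/2 - H) * ∫ r in u..t, r ^ (H - 3/2) * (r - u) ^ (H - 1/2)
        ≤ (1/2 - H) * u ^ (1/2 - H) * (u ^ (3/2 * H - 1) * ((t - u) ^ (H / 2) / (H / 2))) := by
          gcongr
          exact integral_rpow_mul_rpow_sub_le hH (by linarith) hu hut
      _ = (1 - 2 * H) / H * (t - u) ^ (H / 2) * u ^ ((H - 1) / 2) := by
          rw [show (H - 1) / 2 = (1/2 - H) + (3/2 * H - 1) by ring, rpow_add hu]
          field_simp
      _ ≤ _ := by
          gcongr
          · exact div_nonneg (by linarith) hH.le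
          · linarith

lemma intervalIntegrable_KH_sq {H s t : ℝ} (hH : 0 < H) (hH' : H < 1/2) (hs : 0 ≤ s)
    (hst : s ≤ t) : IntervalIntegrable (fun u => KH H t u ^ 2) volume s t := by
  set D := (1 - 2 * H) / H * t ^ (H / 2)
  have hmajorant : IntervalIntegrable
      (fun u => 2 * cH H ^ 2 * ((t - u) ^ (2 * H - 1) + D ^ 2 * u ^ (H - 1))) volume s t :=
    ((intervalIntegrable_sub_rpow (by linarith) s t).add
      ((intervalIntegrable_rpow' (by linarith)).const_mul _)).const_mul _
  refine hmajorant.mono_fun' ((measurable_KH H t).pow_const 2).aestronglyMeasurable ?_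
  rw [uIoc_of_le hst]
  refine ae_restrict_of_forall_mem measurableSet_Ioc fun u hu => ?_
  have hu0 : 0 < u := hs.trans_lt hu.1
  have hK : 0 ≤ KH H t u := (mul_nonneg (cH_nonneg H) (rpow_nonneg (sub_nonneg.2 hu.2) _)).trans
    (cH_mul_rpow_le_KH (by linarith) hH' hu0 hu.2)
  calc ‖KH H t u ^ 2‖ = KH H t u ^ 2 := Real.norm_of_nonneg (sq_nonneg _)
    _ ≤ cH H ^ 2 * ((t - u) ^ (H - 1/2) + D * u ^ ((H - 1) / 2)) ^ 2 := by
        rw [← mul_pow]; exact pow_le_pow_left₀ hK (KH_le_cH_mul hH hH' hu0 hu.2) 2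
    _ ≤ cH H ^ 2 * (2 * (((t - u) ^ (H - 1/2)) ^ 2 + (D * u ^ ((H - 1) / 2)) ^ 2)) := by
        gcongr; exact add_sq_le
    _ = 2 * cH H ^ 2 * ((t - u) ^ (2 * H - 1) + D ^ 2 * u ^ (H - 1)) := by
        rw [mul_pow, rpow_sq (sub_nonneg.2 hu.2), rpow_sq hu0.le]; ring_nf

/-- For `H ∈ (0,1/2)` and `0 ≤ s < t`: `∫_s^t K_H(t,r)² dr ≥ (c_H²/(2H))·(t−s)^{2H}`. -/
theorem KH_square_integral_lower_bound
    (H : ℝ) (hH0 : 0 < H) (hH1 : H < 1/2) (s t : ℝ) (hs : 0 ≤ s) (hst : s < t) :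
    cH H ^ 2 / (2 * H) * (t - s) ^ (2 * H) ≤ ∫ r in s..t, (KH H t r) ^ 2 := by
  calc cH H ^ 2 / (2 * H) * (t - s) ^ (2 * H)
      = ∫ u in s..t, cH H ^ 2 * (t - u) ^ (2 * H - 1) := by
        rw [intervalIntegral.integral_const_mul, integral_sub_rpow (by linarith)]; ring_nf
    _ ≤ ∫ r in s..t, (KH H t r) ^ 2 := by
        refine integral_mono_on_of_le_Ioo hst.le
          ((intervalIntegrable_sub_rpow (by linarith) s t).const_mul _)
          (intervalIntegrable_KH_sq hH0 hH1 hs hst.le) fun u hu => ?_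
        have htu : 0 ≤ t - u := sub_nonneg.2 hu.2.le
        rw [show 2 * H - 1 = 2 * (H - 1/2) by ring, ← rpow_sq htu, ← mul_pow]
        exact pow_le_pow_left₀ (mul_nonneg (cH_nonneg H) (rpow_nonneg htu _))
          (cH_mul_rpow_le_KH (by linarith) hH1 (hs.trans_lt hu.1) hu.2.le) 2

end
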